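/- Suppose the augmented conditional parallel trends assumption holds for the pair (g,t) with 2 ≤ t < g ≤ T, together with overlap. Then the placebo (pre-treatment) weighted DID estimand is zero: E[(w_g^G − w_g^C)(Y_t − Y_{t−1})] = 0, and more generally E[(w_g^G − w_g^C) 1{X ≤ u} (Y_t − Y_{t−1})] = 0 for every u ∈ ℝ^k. -/

import Mathlib

/-!
Never-treated units and units first treated in period `g > t` are both untreated up to period `t`,
so on `{G_g = 1} ∪ {C = 1}` the observed trend `Y_t - Y_{t-1}` is the untreated trend `ΔY(0)`.
The weight `1{X ≤ u}` and the propensity odds `p / (1 - p)` are `σ(X)`-measurable, so by the tower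
property `ΔY(0)` may be replaced by its common conditional mean `m(X)` in both the treated and the
control moment. What remains is the balancing property of inverse propensity weighting,
`E[G_g q] = E[p C / (1 - p) q]` for `σ(X)`-measurable `q`: on `{G_g + C = 1}` one has
`C = 1 - G_g`, and `p = E[G_g | X, G_g + C = 1]` turns `p (1 - G_g) / (1 - p)` into `p`.
With `q = 1` the two normalisations agree, and with `q = 1{X ≤ u} m(X)` the two moments cancel.
-/

open MeasureTheory ProbabilityTheory
open scoped Classical

theorem norm_div_one_sub_le_inv {p ε : ℝ} (hε : 0 < ε) (hp0 : 0 ≤ p) (hp1 : p ≤ 1 - ε) :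
    ‖p / (1 - p)‖ ≤ ε⁻¹ := by
  rw [Real.norm_eq_abs, abs_of_nonneg (div_nonneg hp0 (by linarith)), div_le_iff₀ (by linarith),
    inv_mul_eq_div, le_div_iff₀ hε]
  nlinarith

section Weights

variable {Ω : Type*} [MeasurableSpace Ω] {μ : Measure Ω}

theorem integral_mul_eq_setIntegral_of_zero_or_one {H F : Ω → ℝ} (hH : Measurable H)
    (hH01 : ∀ x, H x = 0 ∨ H x = 1) :
    ∫ x, H x * F x ∂μ = ∫ x in {x | H x = 1}, F x ∂μ := by
  rw [← integral_indicator (show MeasurableSet {x | H x = 1} from hH (measurableSet_singleton 1))]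
  congr 1 with x
  rcases hH01 x with h | h <;> simp [h]

theorem MeasureTheory.Integrable.inverse_propensity_mul {C p h : Ω → ℝ} {ε : ℝ}
    (hh : Integrable h μ) (hp : Measurable p) (hC : Measurable C)
    (hC01 : ∀ x, C x = 0 ∨ C x = 1) (hε : 0 < ε)
    (hpb : ∀ᵐ x ∂μ, 0 ≤ p x ∧ p x ≤ 1 - ε) :
    Integrable (fun x => p x * C x / (1 - p x) * h x) μ := by
  have hW : Measurable fun x => p x * C x / (1 - p x) := by fun_prop
  refine hh.bdd_mul (c := ε⁻¹) hW.aestronglyMeasurable (hpb.mono fun x hx => ?_)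
  rcases hC01 x with hCx | hCx
  · simp [hCx, hε.le]
  · simpa [hCx] using norm_div_one_sub_le_inv hε hx.1 hx.2

end Weights

section CondExpOnEvent

variable {Ω : Type*} {m m0 : MeasurableSpace Ω} {μ : Measure Ω} [IsFiniteMeasure μ] {s : Set Ω}

theorem setIntegral_eq_toReal_mul_integral_cond (s : Set Ω) (F : Ω → ℝ) :
    ∫ x in s, F x ∂μ = (μ s).toReal * ∫ x, F x ∂μ[|s] := by
  by_cases hs : μ s = 0
  · simp [Measure.restrict_eq_zero.2 hs, hs]
  · rw [ProbabilityTheory.cond, integral_smul_measure, smul_eq_mul, ENNReal.toReal_inv, ← mul_assoc,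
      mul_inv_cancel₀ (ENNReal.toReal_ne_zero.2 ⟨hs, measure_ne_top μ s⟩), one_mul]

theorem integrable_cond_iff {F : Ω → ℝ} : Integrable F μ[|s] ↔ IntegrableOn F s μ := by
  by_cases hs : μ s = 0
  · simp [cond_eq_zero_of_meas_eq_zero hs, IntegrableOn, Measure.restrict_eq_zero.2 hs]
  · exact integrable_smul_measure (ENNReal.inv_ne_zero.2 (measure_ne_top μ s))
      (ENNReal.inv_ne_top.2 hs)

theorem integrableOn_of_ae_eq_condExp_cond {h φ : Ω → ℝ} (hφ : φ =ᵐ[μ[|s]] μ[|s][h|m]) :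
    IntegrableOn φ s μ :=
  integrable_cond_iff.1 (integrable_condExp.congr hφ.symm)

theorem setIntegral_mul_eq_of_ae_eq_condExp_cond (hm : m ≤ m0) {v h φ : Ω → ℝ}
    (hv : StronglyMeasurable[m] v) (hvh : IntegrableOn (v * h) s μ) (hh : IntegrableOn h s μ)
    (hφ : φ =ᵐ[μ[|s]] μ[|s][h|m]) :
    ∫ x in s, v x * h x ∂μ = ∫ x in s, v x * φ x ∂μ := by
  rw [setIntegral_eq_toReal_mul_integral_cond, setIntegral_eq_toReal_mul_integral_cond]
  congr 1
  calc ∫ x, v x * h x ∂μ[|s] = ∫ x, (μ[|s][v * h|m]) x ∂μ[|s] := (integral_condExp hm).symm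
    _ = ∫ x, v x * φ x ∂μ[|s] := integral_congr_ae <|
        (condExp_mul_of_stronglyMeasurable_left hv (integrable_cond_iff.2 hvh)
          (integrable_cond_iff.2 hh)).trans (hφ.mono fun x hx => by simp [hx])

theorem setIntegral_mul_eq_inverse_propensity (hm : m ≤ m0) {G p q : Ω → ℝ} {c ε : ℝ}
    (hG : AEStronglyMeasurable G μ) (hGb : ∀ᵐ x ∂μ, ‖G x‖ ≤ c)
    (hp : StronglyMeasurable[m] p) (hε : 0 < ε) (hpb : ∀ᵐ x ∂μ, 0 ≤ p x ∧ p x ≤ 1 - ε)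
    (hpG : p =ᵐ[μ[|s]] μ[|s][G|m]) (hq : StronglyMeasurable[m] q) (hqi : IntegrableOn q s μ) :
    ∫ x in s, G x * q x ∂μ = ∫ x in s, p x / (1 - p x) * (1 - G x) * q x ∂μ := by
  set w : Ω → ℝ := fun x => p x / (1 - p x)
  have hw : StronglyMeasurable[m] w := hp.div (stronglyMeasurable_const.sub hp)
  have hwb : ∀ᵐ x ∂μ.restrict s, ‖w x‖ ≤ ε⁻¹ :=
    ae_restrict_of_ae (hpb.mono fun x hx => norm_div_one_sub_le_inv hε hx.1 hx.2)
  have hGb' : ∀ᵐ x ∂μ.restrict s, ‖G x‖ ≤ c := ae_restrict_of_ae hGb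
  have hGi : IntegrableOn G s μ := (integrable_const c).mono' hG.restrict hGb'
  have hwq : IntegrableOn (w * q) s μ := hqi.bdd_mul (hw.mono hm).aestronglyMeasurable hwb
  have hpb' : ∀ᵐ x ∂μ.restrict s, ‖p x‖ ≤ 1 :=
    ae_restrict_of_ae <| hpb.mono fun x hx => abs_le.2 ⟨by linarith, by linarith⟩
  have hwqp : IntegrableOn (fun x => (w * q) x * p x) s μ :=
    hwq.mul_bdd (hp.mono hm).aestronglyMeasurable.restrict hpb'
  have hwqG : IntegrableOn (fun x => (w * q) x * G x) s μ :=
    hwq.mul_bdd hG.restrict hGb'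
  have hqG : IntegrableOn (q * G) s μ := hqi.mul_bdd hG.restrict hGb'
  have hpq : ∫ x in s, q x * G x ∂μ = ∫ x in s, q x * p x ∂μ :=
    setIntegral_mul_eq_of_ae_eq_condExp_cond hm hq hqG hGi hpG
  have hpwq : ∫ x in s, (w * q) x * G x ∂μ = ∫ x in s, (w * q) x * p x ∂μ :=
    setIntegral_mul_eq_of_ae_eq_condExp_cond hm (hw.mul hq) hwqG hGi hpG
  have hwp : ∀ᵐ x ∂μ.restrict s, q x * p x = (w * q) x - (w * q) x * p x :=
    ae_restrict_of_ae <| hpb.mono fun x hx => by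
      have : 1 - p x ≠ 0 := by linarith
      simp only [w, Pi.mul_apply]
      field_simp
  calc ∫ x in s, G x * q x ∂μ = ∫ x in s, q x * p x ∂μ := by simp_rw [← hpq, mul_comm]
    _ = ∫ x in s, ((w * q) x - (w * q) x * p x) ∂μ := integral_congr_ae hwp
    _ = ∫ x in s, (w * q) x ∂μ - ∫ x in s, (w * q) x * p x ∂μ := integral_sub hwq hwqp
    _ = ∫ x in s, (w * q) x ∂μ - ∫ x in s, (w * q) x * G x ∂μ := by rw [hpwq]
    _ = ∫ x in s, p x / (1 - p x) * (1 - G x) * q x ∂μ := by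
        rw [← integral_sub hwq hwqG]
        congr 1 with x
        simp only [w, Pi.mul_apply]
        ring

theorem integral_mul_mul_eq_of_ae_eq_condExp_cond (hm : m ≤ m0) {H v h φ : Ω → ℝ} {c : ℝ}
    (hH : Measurable H) (hH01 : ∀ x, H x = 0 ∨ H x = 1)
    (hv : StronglyMeasurable[m] v) (hvb : ∀ᵐ x ∂μ, ‖v x‖ ≤ c) (hh : Integrable h μ)
    (hφ : φ =ᵐ[μ[|{x | H x = 1}]] μ[|{x | H x = 1}][h|m]) :
    ∫ x, H x * (v x * h x) ∂μ = ∫ x, H x * (v x * φ x) ∂μ := by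
  rw [integral_mul_eq_setIntegral_of_zero_or_one hH hH01,
    integral_mul_eq_setIntegral_of_zero_or_one hH hH01]
  exact setIntegral_mul_eq_of_ae_eq_condExp_cond hm hv
    (hh.bdd_mul (hv.mono hm).aestronglyMeasurable hvb).integrableOn hh.integrableOn hφ

theorem integral_inverse_propensity_mul_eq_of_ae_eq_condExp_cond (hm : m ≤ m0)
    {C p v h φ : Ω → ℝ} {ε c : ℝ} (hC : Measurable C) (hC01 : ∀ x, C x = 0 ∨ C x = 1)
    (hp : StronglyMeasurable[m] p) (hε : 0 < ε) (hpb : ∀ᵐ x ∂μ, 0 ≤ p x ∧ p x ≤ 1 - ε)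
    (hv : StronglyMeasurable[m] v) (hvb : ∀ᵐ x ∂μ, ‖v x‖ ≤ c) (hh : Integrable h μ)
    (hφ : φ =ᵐ[μ[|{x | C x = 1}]] μ[|{x | C x = 1}][h|m]) :
    ∫ x, p x * C x / (1 - p x) * (v x * h x) ∂μ = ∫ x, p x * C x / (1 - p x) * (v x * φ x) ∂μ := by
  have hodds : ∀ k : Ω → ℝ, (fun x => p x * C x / (1 - p x) * (v x * k x)) =
      fun x => C x * (p x / (1 - p x) * v x * k x) := fun k => by ext x; ring
  simp only [hodds]
  refine integral_mul_mul_eq_of_ae_eq_condExp_cond hm hC hC01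
    (hp.div (stronglyMeasurable_const.sub hp) |>.mul hv) (c := ε⁻¹ * c) ?_ hh hφ
  filter_upwards [hpb, hvb] with x hpx hvx
  rw [norm_mul]
  exact mul_le_mul (norm_div_one_sub_le_inv hε hpx.1 hpx.2) hvx (norm_nonneg _)
    (inv_nonneg.2 hε.le)

theorem integral_mul_eq_integral_inverse_propensity_mul (hm : m ≤ m0) {G C p q : Ω → ℝ} {ε : ℝ}
    (hG : Measurable G) (hC : Measurable C) (hG01 : ∀ x, G x = 0 ∨ G x = 1)
    (hC01 : ∀ x, C x = 0 ∨ C x = 1) (hGC : ∀ x, G x + C x ≤ 1)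
    (hp : StronglyMeasurable[m] p) (hε : 0 < ε) (hpb : ∀ᵐ x ∂μ, 0 ≤ p x ∧ p x ≤ 1 - ε)
    (hpG : p =ᵐ[μ[|{x | G x + C x = 1}]] μ[|{x | G x + C x = 1}][G|m])
    (hq : StronglyMeasurable[m] q) (hqi : IntegrableOn q {x | G x + C x = 1} μ) :
    ∫ x, G x * q x ∂μ = ∫ x, p x * C x / (1 - p x) * q x ∂μ := by
  set D := {x | G x + C x = 1}
  have hD : MeasurableSet D := (hG.add hC) (measurableSet_singleton 1)
  have hoff : ∀ x ∉ D, G x = 0 ∧ C x = 0 := fun x hx => by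
    have hle := hGC x
    have hx : G x + C x ≠ 1 := hx
    rcases hG01 x with hg | hg <;> rcases hC01 x with hc | hc
    · exact ⟨hg, hc⟩
    · norm_num [hg, hc] at hx
    · norm_num [hg, hc] at hx
    · norm_num [hg, hc] at hle
  have hGb : ∀ᵐ x ∂μ, ‖G x‖ ≤ 1 := ae_of_all _ fun x => by rcases hG01 x with h | h <;> simp [h]
  calc ∫ x, G x * q x ∂μ = ∫ x in D, G x * q x ∂μ :=
        (setIntegral_eq_integral_of_forall_compl_eq_zero fun x hx => by simp [(hoff x hx).1]).symm
    _ = ∫ x in D, p x / (1 - p x) * (1 - G x) * q x ∂μ :=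
        setIntegral_mul_eq_inverse_propensity hm hG.aestronglyMeasurable hGb hp hε hpb hpG hq hqi
    _ = ∫ x in D, p x * C x / (1 - p x) * q x ∂μ := by
        refine setIntegral_congr_fun hD fun x (hx : G x + C x = 1) => ?_
        rw [show 1 - G x = C x by linarith]
        ring
    _ = ∫ x, p x * C x / (1 - p x) * q x ∂μ :=
        setIntegral_eq_integral_of_forall_compl_eq_zero fun x hx => by simp [(hoff x hx).2]

theorem integral_weighted_did_eq_zero (hm : m ≤ m0) {G C p Δ Δ₀ φ f : Ω → ℝ} {ε : ℝ}
    (hG : Measurable G) (hC : Measurable C) (hG01 : ∀ x, G x = 0 ∨ G x = 1)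
    (hC01 : ∀ x, C x = 0 ∨ C x = 1) (hGC : ∀ x, G x + C x ≤ 1)
    (hΔ : ∀ x, G x = 1 ∨ C x = 1 → Δ x = Δ₀ x) (hΔ₀ : Integrable Δ₀ μ)
    (hp : StronglyMeasurable[m] p) (hε : 0 < ε) (hpb : ∀ᵐ x ∂μ, 0 ≤ p x ∧ p x ≤ 1 - ε)
    (hpG : p =ᵐ[μ[|{x | G x + C x = 1}]] μ[|{x | G x + C x = 1}][G|m])
    (hφ : StronglyMeasurable[m] φ)
    (hφG : φ =ᵐ[μ[|{x | G x = 1}]] μ[|{x | G x = 1}][Δ₀|m])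
    (hφC : φ =ᵐ[μ[|{x | C x = 1}]] μ[|{x | C x = 1}][Δ₀|m])
    (hf : StronglyMeasurable[m] f) (hfb : ∀ x, ‖f x‖ ≤ 1) :
    ∫ x, (G x / ∫ y, G y ∂μ - p x * C x / (1 - p x) / ∫ y, p y * C y / (1 - p y) ∂μ) *
      f x * Δ x ∂μ = 0 := by
  set W : Ω → ℝ := fun x => p x * C x / (1 - p x)
  have hfΔ₀ : Integrable (fun x => f x * Δ₀ x) μ :=
    hΔ₀.bdd_mul (hf.mono hm).aestronglyMeasurable (ae_of_all _ hfb)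
  have hGi : Integrable (fun x => G x * (f x * Δ₀ x)) μ :=
    hfΔ₀.bdd_mul (c := 1) hG.aestronglyMeasurable
      (ae_of_all _ fun x => by rcases hG01 x with h | h <;> simp [h])
  have hWi : Integrable (fun x => W x * (f x * Δ₀ x)) μ :=
    hfΔ₀.inverse_propensity_mul (hp.mono hm).measurable hC hC01 hε hpb
  have hφD : IntegrableOn φ {x | G x + C x = 1} μ := by
    refine IntegrableOn.mono_set (t := {x | G x = 1} ∪ {x | C x = 1}) ?_ fun x hx => ?_
    · exact (integrableOn_of_ae_eq_condExp_cond hφG).union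
        (integrableOn_of_ae_eq_condExp_cond hφC)
    · have hx : G x + C x = 1 := hx
      rcases hG01 x with h | h
      · exact Or.inr (show C x = 1 by linarith)
      · exact Or.inl h
  have hbal : ∀ q, StronglyMeasurable[m] q → IntegrableOn q {x | G x + C x = 1} μ →
      ∫ x, G x * q x ∂μ = ∫ x, W x * q x ∂μ := fun q hq hqi =>
    integral_mul_eq_integral_inverse_propensity_mul hm hG hC hG01 hC01 hGC hp hε hpb hpG hq hqi
  have hmass : ∫ x, G x ∂μ = ∫ x, W x ∂μ := by
    simpa using hbal 1 stronglyMeasurable_const (integrable_const 1).integrableOn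
  have htrendG : ∫ x, G x * (f x * Δ₀ x) ∂μ = ∫ x, G x * (f x * φ x) ∂μ :=
    integral_mul_mul_eq_of_ae_eq_condExp_cond hm hG hG01 hf (ae_of_all _ hfb) hΔ₀ hφG
  have htrendC : ∫ x, W x * (f x * Δ₀ x) ∂μ = ∫ x, W x * (f x * φ x) ∂μ :=
    integral_inverse_propensity_mul_eq_of_ae_eq_condExp_cond hm hC hC01 hp hε hpb hf
      (ae_of_all _ hfb) hΔ₀ hφC
  have hsplit : ∀ x, (G x / ∫ y, G y ∂μ - W x / ∫ y, W y ∂μ) * f x * Δ x =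
      (∫ y, G y ∂μ)⁻¹ * (G x * (f x * Δ₀ x)) - (∫ y, W y ∂μ)⁻¹ * (W x * (f x * Δ₀ x)) := by
    intro x
    by_cases hx : G x = 1 ∨ C x = 1
    · rw [hΔ x hx]; ring
    · rw [not_or] at hx
      simp [W, (hG01 x).resolve_right hx.1, (hC01 x).resolve_right hx.2]
  calc _ = ∫ x, ((∫ y, G y ∂μ)⁻¹ * (G x * (f x * Δ₀ x)) -
        (∫ y, W y ∂μ)⁻¹ * (W x * (f x * Δ₀ x))) ∂μ := integral_congr_ae (ae_of_all _ hsplit)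
    _ = 0 := by
      rw [integral_sub (hGi.const_mul _) (hWi.const_mul _), integral_const_mul,
        integral_const_mul, htrendG, htrendC, hmass, hbal (fun x => f x * φ x) (hf.mul hφ)
          (hφD.bdd_mul (hf.mono hm).aestronglyMeasurable.restrict (ae_of_all _ hfb)), sub_self]

end CondExpOnEvent

theorem not_treated_before_of_eq_one {T g s : ℕ} {a : ℕ → ℝ} {c : ℝ} (ha : ∀ i, 0 ≤ a i)
    (hc : 0 ≤ c) (hsum : ∑ i ∈ Finset.Icc 2 T, a i + c = 1) (hsg : s < g) (hgT : g ≤ T)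
    (h : a g = 1 ∨ c = 1) : ¬ ∃ i, 2 ≤ i ∧ i ≤ s ∧ a i = 1 := by
  rintro ⟨i, h2i, his, hai⟩
  have hi : i ∈ Finset.Icc 2 T := Finset.mem_Icc.2 ⟨h2i, by omega⟩
  rcases h with hag | hc1
  · have hg : g ∈ Finset.Icc 2 T := Finset.mem_Icc.2 ⟨by omega, hgT⟩
    linarith [Finset.add_le_sum (fun j _ => ha j) hi hg (by omega : i ≠ g)]
  · linarith [Finset.single_le_sum (fun j _ => ha j) hi]

theorem placebo_moments_vanish_general
    {Ω : Type*} [MeasurableSpace Ω] (P : Measure Ω) [IsProbabilityMeasure P]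
    (k T : ℕ)
    -- potential outcomes, observed outcomes, covariates, group/control indicators
    (Y0 Y1 Y : ℕ → Ω → ℝ) (X : Ω → (Fin k → ℝ)) (G : ℕ → Ω → ℝ) (C : Ω → ℝ)
    -- measurability and integrability
    (hY0int : ∀ s, Integrable (Y0 s) P)
    (hXmeas : Measurable X) (hGmeas : ∀ g, Measurable (G g)) (hCmeas : Measurable C)
    -- indicator structure
    (hG01 : ∀ g ω, G g ω = 0 ∨ G g ω = 1)
    (hC01 : ∀ ω, C ω = 0 ∨ C ω = 1)
    (hsum : ∀ ω, (∑ g ∈ Finset.Icc 2 T, G g ω) + C ω = 1)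
    -- observed outcomes
    (hobs : ∀ s ω, Y s ω =
      if ∃ g', 2 ≤ g' ∧ g' ≤ s ∧ G g' ω = 1 then Y1 s ω else Y0 s ω)
    -- the pair (g, t): a pre-treatment period, 2 ≤ t < g ≤ T
    (g t : ℕ) (ht : 2 ≤ t) (htg : t < g) (hgT : g ≤ T)
    -- the generalized propensity score: a σ(X)-measurable version of E[G_g | X, G_g + C = 1]
    (p : Ω → ℝ)
    (hpmeas : Measurable[MeasurableSpace.comap X inferInstance] p)
    (hpver : p =ᵐ[P[|{ω | G g ω + C ω = 1}]]
      (P[|{ω | G g ω + C ω = 1}])[G g | MeasurableSpace.comap X inferInstance])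
    -- overlap
    (ε : ℝ) (hε : 0 < ε)
    (hoverlap : ∀ᵐ ω ∂P, 0 ≤ p ω ∧ p ω ≤ 1 - ε)
    -- augmented conditional parallel trends for the pair (g, t)
    (m : (Fin k → ℝ) → ℝ) (hmmeas : Measurable m)
    (hmG : (fun ω => m (X ω)) =ᵐ[P[|{ω | G g ω = 1}]]
      (P[|{ω | G g ω = 1}])[fun ω => Y0 t ω - Y0 (t - 1) ω |
        MeasurableSpace.comap X inferInstance])
    (hmC : (fun ω => m (X ω)) =ᵐ[P[|{ω | C ω = 1}]]
      (P[|{ω | C ω = 1}])[fun ω => Y0 t ω - Y0 (t - 1) ω |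
        MeasurableSpace.comap X inferInstance]) :
    -- conclusion: the placebo weighted DID estimand is zero, pointwise in u as well
    (∫ ω,
        (G g ω / (∫ ω', G g ω' ∂P) -
          (p ω * C ω / (1 - p ω)) / (∫ ω', p ω' * C ω' / (1 - p ω') ∂P)) *
        (Y t ω - Y (t - 1) ω) ∂P = 0) ∧
    (∀ u : Fin k → ℝ,
      ∫ ω,
        (G g ω / (∫ ω', G g ω' ∂P) -
          (p ω * C ω / (1 - p ω)) / (∫ ω', p ω' * C ω' / (1 - p ω') ∂P)) *
        (if ∀ j, X ω j ≤ u j then (1 : ℝ) else 0) * (Y t ω - Y (t - 1) ω) ∂P = 0) := by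
  have hGnn : ∀ g ω, 0 ≤ G g ω := fun g ω => by rcases hG01 g ω with h | h <;> simp [h]
  have hCnn : ∀ ω, 0 ≤ C ω := fun ω => by rcases hC01 ω with h | h <;> simp [h]
  have hGC : ∀ ω, G g ω + C ω ≤ 1 := fun ω => by
    linarith [hsum ω, Finset.single_le_sum (fun i _ => hGnn i ω)
      (Finset.mem_Icc.2 ⟨by omega, hgT⟩ : g ∈ Finset.Icc 2 T)]
  have hΔ : ∀ ω, G g ω = 1 ∨ C ω = 1 → Y t ω - Y (t - 1) ω = Y0 t ω - Y0 (t - 1) ω := by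
    intro ω hω
    have hY : ∀ s < g, Y s ω = Y0 s ω := fun s hs => by
      rw [hobs, if_neg (not_treated_before_of_eq_one (hGnn · ω) (hCnn ω) (hsum ω) hs hgT hω)]
    rw [hY t htg, hY (t - 1) (by omega)]
  have hmoment := fun (f : Ω → ℝ) hf hfb => integral_weighted_did_eq_zero (μ := P) (f := f)
    hXmeas.comap_le (hGmeas g) hCmeas (hG01 g) hC01 hGC hΔ ((hY0int t).sub (hY0int (t - 1)))
    hpmeas.stronglyMeasurable hε hoverlap hpver
    (hmmeas.comp (comap_measurable X)).stronglyMeasurable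
    hmG hmC hf hfb
  refine ⟨by simpa using hmoment 1 stronglyMeasurable_const (by simp), fun u => hmoment _ ?_ ?_⟩
  · exact (Measurable.ite (measurableSet_Iic.preimage (comap_measurable X)) measurable_const
      measurable_const).stronglyMeasurable
  · intro ω
    split_ifs <;> simp

/-- placebo pre-treatment moments vanish under the augmented
conditional parallel trends assumption.  For `2 ≤ t < g ≤ T`, under augmented
conditional parallel trends for `(g,t)` together with overlap,
`E[(w_g^G − w_g^C)(Y_t − Y_{t−1})] = 0` and, more generally,
`E[(w_g^G − w_g^C) 1{X ≤ u} (Y_t − Y_{t−1})] = 0` for every `u ∈ ℝ^k`. -/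
theorem placebo_moments_vanish
    {Ω : Type*} [MeasurableSpace Ω] (P : Measure Ω) [IsProbabilityMeasure P]
    (k T : ℕ) (hT : 2 ≤ T)
    -- potential outcomes, observed outcomes, covariates, group/control indicators
    (Y0 Y1 Y : ℕ → Ω → ℝ) (X : Ω → (Fin k → ℝ)) (G : ℕ → Ω → ℝ) (C : Ω → ℝ)
    -- measurability and integrability
    (hY0meas : ∀ s, Measurable (Y0 s)) (hY1meas : ∀ s, Measurable (Y1 s))
    (hY0int : ∀ s, Integrable (Y0 s) P) (hY1int : ∀ s, Integrable (Y1 s) P)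
    (hXmeas : Measurable X) (hGmeas : ∀ g, Measurable (G g)) (hCmeas : Measurable C)
    -- indicator structure
    (hG01 : ∀ g ω, G g ω = 0 ∨ G g ω = 1)
    (hC01 : ∀ ω, C ω = 0 ∨ C ω = 1)
    (hsum : ∀ ω, (∑ g ∈ Finset.Icc 2 T, G g ω) + C ω = 1)
    -- observed outcomes
    (hobs : ∀ s ω, Y s ω =
      if ∃ g', 2 ≤ g' ∧ g' ≤ s ∧ G g' ω = 1 then Y1 s ω else Y0 s ω)
    -- the pair (g, t): a pre-treatment period, 2 ≤ t < g ≤ T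
    (g t : ℕ) (ht : 2 ≤ t) (htg : t < g) (hgT : g ≤ T)
    (hPg : 0 < P {ω | G g ω = 1}) (hPC : 0 < P {ω | C ω = 1})
    -- the generalized propensity score: a σ(X)-measurable version of E[G_g | X, G_g + C = 1]
    (p : Ω → ℝ)
    (hpmeas : Measurable[MeasurableSpace.comap X inferInstance] p)
    (hpver : p =ᵐ[P[|{ω | G g ω + C ω = 1}]]
      (P[|{ω | G g ω + C ω = 1}])[G g | MeasurableSpace.comap X inferInstance])
    -- overlap
    (ε : ℝ) (hε : 0 < ε)
    (hoverlap : ∀ᵐ ω ∂P, 0 ≤ p ω ∧ p ω ≤ 1 - ε)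
    -- augmented conditional parallel trends for the pair (g, t)
    (m : (Fin k → ℝ) → ℝ) (hmmeas : Measurable m)
    (hmG : (fun ω => m (X ω)) =ᵐ[P[|{ω | G g ω = 1}]]
      (P[|{ω | G g ω = 1}])[fun ω => Y0 t ω - Y0 (t - 1) ω |
        MeasurableSpace.comap X inferInstance])
    (hmC : (fun ω => m (X ω)) =ᵐ[P[|{ω | C ω = 1}]]
      (P[|{ω | C ω = 1}])[fun ω => Y0 t ω - Y0 (t - 1) ω |
        MeasurableSpace.comap X inferInstance]) :
    -- conclusion: the placebo weighted DID estimand is zero, pointwise in u as well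
    (∫ ω,
        (G g ω / (∫ ω', G g ω' ∂P) -
          (p ω * C ω / (1 - p ω)) / (∫ ω', p ω' * C ω' / (1 - p ω') ∂P)) *
        (Y t ω - Y (t - 1) ω) ∂P = 0) ∧
    (∀ u : Fin k → ℝ,
      ∫ ω,
        (G g ω / (∫ ω', G g ω' ∂P) -
          (p ω * C ω / (1 - p ω)) / (∫ ω', p ω' * C ω' / (1 - p ω') ∂P)) *
        (if ∀ j, X ω j ≤ u j then (1 : ℝ) else 0) * (Y t ω - Y (t - 1) ω) ∂P = 0) :=
  placebo_moments_vanish_general P k T Y0 Y1 Y X G C hY0int hXmeas hGmeas hCmeas hG01 hC01 hsum hobs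
    g t ht htg hgT p hpmeas hpver ε hε hoverlap m hmmeas hmG hmC
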